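/- Let B ⊆ A be an inclusion of finite dimensional unital k-algebras such that A is projective as a left B-module and as a right B-module, and both A and B are symmetric algebras (A ≅ Hom_k(A,k) as A-A-bimodules and similarly for B). Then the induction functor A ⊗_B (−) : B-Mod → A-Mod and the restriction functor : A-Mod → B-Mod form a biadjoint pair (each is both left and right adjoint of the other). -/
import Mathlib


open TensorProduct

namespace Statement11

variable (k A B : Type) [Field k] [Ring A] [Algebra k A] [Ring B] [Algebra k B]
  (ι : B →ₐ[k] A)

/-- The subspace of relations defining `A ⊗_B M` inside `A ⊗_k M`. -/
noncomputable def rel (M : Type) [AddCommGroup M] [Module k M] [Module B M] :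
    Submodule A (A ⊗[k] M) :=
  Submodule.span A
    {z : A ⊗[k] M | ∃ (a : A) (b : B) (m : M), z = (a * ι b) ⊗ₜ[k] m - a ⊗ₜ[k] (b • m)}

/-- The induced module `A ⊗_B M`, realized as a quotient of `A ⊗_k M`. -/
noncomputable abbrev T (M : Type) [AddCommGroup M] [Module k M] [Module B M] : Type :=
  (A ⊗[k] M) ⧸ rel k A B ι M

set_option maxHeartbeats 1600000 in
/-- Let `B ⊆ A` be an inclusion (`ι`) of finite dimensional unital
`k`-algebras such that `A` is projective as a left and as a right `B`-module, and both `A`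
and `B` are symmetric algebras (given by nondegenerate symmetric associative trace forms).
Then induction `A ⊗_B (−) : B-Mod → A-Mod` and restriction (along `ι`) form a biadjoint
pair: `Hom_A(A ⊗_B M, N) ≃ Hom_B(M, Res N)` (with the canonical formula, hence natural),
and `Hom_B(Res N, M) ≃ Hom_A(N, A ⊗_B M)`, naturally in `N`. -/
theorem statement11 [FiniteDimensional k A] [FiniteDimensional k B]
    (hι : Function.Injective ι)
    [Module B A] (hBA : ∀ (b : B) (a : A), b • a = ι b * a)
    [Module Bᵐᵒᵖ A] (hBAop : ∀ (b : B) (a : A), MulOpposite.op b • a = a * ι b)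
    -- A is projective as a left and as a right B-module
    (hprojL : Module.Projective B A) (hprojR : Module.Projective Bᵐᵒᵖ A)
    -- A and B are symmetric algebras
    (φA : A →ₗ[k] k) (hφA_symm : ∀ a a' : A, φA (a * a') = φA (a' * a))
    (hφA_nondeg : ∀ a : A, (∀ a' : A, φA (a * a') = 0) → a = 0)
    (φB : B →ₗ[k] k) (hφB_symm : ∀ b b' : B, φB (b * b') = φB (b' * b))
    (hφB_nondeg : ∀ b : B, (∀ b' : B, φB (b * b') = 0) → b = 0) :
    -- Induction is left adjoint to restriction: Hom_A(A ⊗_B M, N) ≃ Hom_B(M, N)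
    (∀ (M : Type) [AddCommGroup M] [Module k M] [Module B M] [IsScalarTower k B M]
       (N : Type) [AddCommGroup N] [Module k N] [Module A N] [Module B N]
       [IsScalarTower k A N] [IsScalarTower B A N]
       (_ : ∀ (b : B) (n : N), b • n = ι b • n),
      ∃ E : ((T k A B ι M) →ₗ[A] N) ≃ (M →ₗ[B] N),
        ∀ (ψ : (T k A B ι M) →ₗ[A] N) (m : M),
          E ψ m = ψ (Submodule.Quotient.mk ((1 : A) ⊗ₜ[k] m))) ∧
    -- Restriction is left adjoint to induction: Hom_B(Res N, M) ≃ Hom_A(N, A ⊗_B M),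
    -- naturally in N
    (∀ (M : Type) [AddCommGroup M] [Module k M] [Module B M] [IsScalarTower k B M],
      ∃ E : ∀ (N : Type) [AddCommGroup N] [Module k N] [Module A N] [Module B N]
          [IsScalarTower k A N] [IsScalarTower B A N]
          (_ : ∀ (b : B) (n : N), b • n = ι b • n),
          (N →ₗ[B] M) ≃ (N →ₗ[A] (T k A B ι M)),
        ∀ (N : Type) [AddCommGroup N] [Module k N] [Module A N] [Module B N]
          [IsScalarTower k A N] [IsScalarTower B A N]
          (hN : ∀ (b : B) (n : N), b • n = ι b • n)
          (N' : Type) [AddCommGroup N'] [Module k N'] [Module A N'] [Module B N']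
          [IsScalarTower k A N'] [IsScalarTower B A N']
          (hN' : ∀ (b : B) (n : N'), b • n = ι b • n)
          (f : N' →ₗ[A] N) (φ : N →ₗ[B] M),
          E N' hN' (φ ∘ₗ LinearMap.restrictScalars B f) = (E N hN φ) ∘ₗ f) := by
  classical
  -- B-side dual bases
  set bB := Module.finBasis k B with hbB
  set ℓB : B →ₗ[k] Module.Dual k B :=
    { toFun := fun d => φB.comp (LinearMap.mulRight k d)
      map_add' := by intro x y; ext c; simp [mul_add]
      map_smul' := by intro r x; ext c; simp [mul_smul_comm] } with hℓB
  have hℓB_apply : ∀ d c, ℓB d c = φB (c * d) := fun d c => rfl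
  have hℓB_inj : Function.Injective ℓB := by
    rw [← LinearMap.ker_eq_bot, LinearMap.ker_eq_bot']
    intro d hd
    refine hφB_nondeg d fun c => ?_
    rw [hφB_symm]
    exact LinearMap.congr_fun hd c
  have hℓB_surj : Function.Surjective ℓB :=
    (LinearMap.injective_iff_surjective_of_finrank_eq_finrank
      (Subspace.dual_finrank_eq).symm).mp hℓB_inj
  choose b' hb' using fun i => hℓB_surj (bB.coord i)
  have hδ : ∀ i j, φB (bB i * b' j) = if i = j then 1 else 0 := by
    intro i j
    have := LinearMap.congr_fun (hb' j) (bB i)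
    rw [hℓB_apply] at this
    rw [this, Module.Basis.coord_apply, Module.Basis.repr_self, Finsupp.single_apply]
  have expand1 : ∀ c : B, ∑ i, φB (c * b' i) • bB i = c := by
    intro c
    have h2 : ∀ i, φB (c * b' i) = bB.repr c i := by
      intro i
      have := LinearMap.congr_fun (hb' i) c
      rw [hℓB_apply] at this
      rw [this, Module.Basis.coord_apply]
    simp_rw [h2]
    exact bB.sum_repr c
  have killB : ∀ c : B, (∀ j, φB (bB j * c) = 0) → c = 0 := by
    intro c h
    refine hφB_nondeg c fun d => ?_
    rw [hφB_symm]
    conv_lhs => rw [← bB.sum_repr d]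
    rw [Finset.sum_mul, map_sum]
    refine Finset.sum_eq_zero fun j _ => ?_
    rw [smul_mul_assoc, map_smul, h j, smul_zero]
  have expand2 : ∀ c : B, ∑ i, φB (bB i * c) • b' i = c := by
    intro c
    have h0 : ∀ j, φB (bB j * ((∑ i, φB (bB i * c) • b' i) - c)) = 0 := by
      intro j
      rw [mul_sub, map_sub, Finset.mul_sum, map_sum]
      have : ∀ i ∈ Finset.univ, φB (bB j * φB (bB i * c) • b' i)
          = φB (bB i * c) * φB (bB j * b' i) := by
        intro i _
        rw [mul_smul_comm, map_smul, smul_eq_mul]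
      rw [Finset.sum_congr rfl this]
      simp_rw [hδ]
      simp [Finset.sum_ite_eq]
    have := killB _ h0
    exact sub_eq_zero.mp this
  -- Casimir
  have casimir1 : ∀ (μ : B →ₗ[k] k) (d : B),
      ∑ i, μ (d * bB i) • b' i = ∑ i, μ (bB i) • (b' i * d) := by
    intro μ d
    have h0 : ∀ j, φB (bB j * ((∑ i, μ (d * bB i) • b' i) - ∑ i, μ (bB i) • (b' i * d))) = 0 := by
      intro j
      rw [mul_sub, map_sub, Finset.mul_sum, Finset.mul_sum, map_sum, map_sum]
      have e1 : ∑ i, φB (bB j * μ (d * bB i) • b' i) = μ (d * bB j) := by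
        have : ∀ i ∈ Finset.univ, φB (bB j * μ (d * bB i) • b' i)
            = μ (d * bB i) * φB (bB j * b' i) := fun i _ => by
          rw [mul_smul_comm, map_smul, smul_eq_mul]
        rw [Finset.sum_congr rfl this]
        simp_rw [hδ]
        simp [Finset.sum_ite_eq]
      have e2 : ∑ i, φB (bB j * μ (bB i) • (b' i * d)) = μ (d * bB j) := by
        have : ∀ i ∈ Finset.univ, φB (bB j * μ (bB i) • (b' i * d))
            = φB ((d * bB j) * b' i) • μ (bB i) := fun i _ => by
          have harg : φB (bB j * (b' i * d)) = φB ((d * bB j) * b' i) := by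
            rw [← mul_assoc, hφB_symm, ← mul_assoc]
          rw [mul_smul_comm, map_smul, smul_eq_mul, smul_eq_mul, mul_comm, harg]
        rw [Finset.sum_congr rfl this]
        calc (∑ i, φB ((d * bB j) * b' i) • μ (bB i)) = μ (∑ i, φB ((d * bB j) * b' i) • bB i) := by
              rw [map_sum]; simp
          _ = μ (d * bB j) := by rw [expand1]
      rw [e1, e2, sub_self]
    have := killB _ h0
    exact sub_eq_zero.mp this
  have casimir2 : ∀ (μ : B →ₗ[k] k) (d : B),
      ∑ i, μ (bB i * d) • b' i = ∑ i, μ (bB i) • (d * b' i) := by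
    intro μ d
    have h0 : ∀ j, φB (bB j * ((∑ i, μ (bB i * d) • b' i) - ∑ i, μ (bB i) • (d * b' i))) = 0 := by
      intro j
      rw [mul_sub, map_sub, Finset.mul_sum, Finset.mul_sum, map_sum, map_sum]
      have e1 : ∑ i, φB (bB j * μ (bB i * d) • b' i) = μ (bB j * d) := by
        have : ∀ i ∈ Finset.univ, φB (bB j * μ (bB i * d) • b' i)
            = μ (bB i * d) * φB (bB j * b' i) := fun i _ => by
          rw [mul_smul_comm, map_smul, smul_eq_mul]
        rw [Finset.sum_congr rfl this]
        simp_rw [hδ]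
        simp [Finset.sum_ite_eq]
      have e2 : ∑ i, φB (bB j * μ (bB i) • (d * b' i)) = μ (bB j * d) := by
        have : ∀ i ∈ Finset.univ, φB (bB j * μ (bB i) • (d * b' i))
            = φB ((bB j * d) * b' i) • μ (bB i) := fun i _ => by
          rw [mul_smul_comm, map_smul, smul_eq_mul, smul_eq_mul, mul_comm, ← mul_assoc]
        rw [Finset.sum_congr rfl this]
        calc (∑ i, φB ((bB j * d) * b' i) • μ (bB i))
            = μ (∑ i, φB ((bB j * d) * b' i) • bB i) := by rw [map_sum]; simp
          _ = μ (bB j * d) := by rw [expand1]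
      rw [e1, e2, sub_self]
    exact sub_eq_zero.mp (killB _ h0)
  -- A-side : nondegeneracy and representability of functionals
  have ndA : ∀ d : A, (∀ x, φA (x * d) = 0) → d = 0 := by
    intro d h
    exact hφA_nondeg d fun x => by rw [hφA_symm]; exact h x
  have surjA : ∀ μ : A →ₗ[k] k, ∃ c : A, ∀ x, φA (x * c) = μ x := by
    set ℓA : A →ₗ[k] Module.Dual k A :=
      { toFun := fun d => φA.comp (LinearMap.mulRight k d)
        map_add' := by intro x y; ext c; simp [mul_add]
        map_smul' := by intro r x; ext c; simp [mul_smul_comm] } with hℓA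
    have hinj : Function.Injective ℓA := by
      rw [← LinearMap.ker_eq_bot, LinearMap.ker_eq_bot']
      intro d hd
      exact ndA d fun x => LinearMap.congr_fun hd x
    have hsurj : Function.Surjective ℓA :=
      (LinearMap.injective_iff_surjective_of_finrank_eq_finrank
        (Subspace.dual_finrank_eq).symm).mp hinj
    intro μ
    obtain ⟨c, hc⟩ := hsurj μ
    exact ⟨c, fun x => LinearMap.congr_fun hc x⟩
  -- dual basis of A as a left B-module, via projectivity
  set bA := Module.finBasis k A with hbA
  set π : (Fin (Module.finrank k A) → B) →ₗ[B] A :=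
    { toFun := fun v => ∑ j, ι (v j) * bA j
      map_add' := by intro v w; simp [map_add, add_mul, Finset.sum_add_distrib]
      map_smul' := by
        intro b v
        simp only [Pi.smul_apply, smul_eq_mul, map_mul, RingHom.id_apply]
        rw [hBA, Finset.mul_sum]
        exact Finset.sum_congr rfl fun j _ => (mul_assoc _ _ _)
    } with hπ
  have hπ_apply : ∀ v, π v = ∑ j, ι (v j) * bA j := fun v => rfl
  have surjπ : Function.Surjective π := by
    intro a
    refine ⟨fun j => algebraMap k B (bA.repr a j), ?_⟩
    rw [hπ_apply]
    have : ∀ j ∈ Finset.univ, ι (algebraMap k B (bA.repr a j)) * bA j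
        = bA.repr a j • bA j := fun j _ => by rw [AlgHom.commutes, ← Algebra.smul_def]
    rw [Finset.sum_congr rfl this, bA.sum_repr]
  obtain ⟨σ, hσ⟩ := by
    haveI := hprojL
    exact Module.projective_lifting_property π (LinearMap.id (R := B) (M := A)) surjπ
  have H1 : ∀ x : A, ∑ j, ι (σ x j) * bA j = x := by
    intro x
    have := LinearMap.congr_fun hσ x
    simpa [hπ_apply] using this
  have H2 : ∀ (b : B) (x : A) j, σ (ι b * x) j = b * σ x j := by
    intro b x j
    rw [← hBA, map_smul]
    rfl
  have hσk : ∀ (c : k) (x : A) j, σ (c • x) j = c • σ x j := by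
    intro c x j
    have h1 : c • x = (algebraMap k B c) • x := by
      rw [hBA, AlgHom.commutes, ← Algebra.smul_def]
    rw [h1, map_smul]
    simp [Algebra.smul_def]
  have σadd : ∀ (x y : A) j, σ (x + y) j = σ x j + σ y j := by
    intro x y j; rw [show σ (x + y) = σ x + σ y from map_add σ x y]; rfl
  -- the elements c_j
  set μσ : Fin (Module.finrank k A) → (A →ₗ[k] k) := fun j =>
    { toFun := fun x => φB (σ x j)
      map_add' := by intro x y; show φB (σ (x + y) j) = φB (σ x j) + φB (σ y j); rw [σadd, map_add]
      map_smul' := by intro c x; show φB (σ (c • x) j) = _; rw [hσk, map_smul]; rfl } with hμσ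
  choose cj hcj' using fun j => surjA (μσ j)
  have hcj : ∀ j x, φA (x * cj j) = φB (σ x j) := fun j x => hcj' j x
  -- the master pairing identity
  have P : ∀ (z : A) (j) (b : B), φA (z * (cj j * ι b)) = φB (b * σ z j) := by
    intro z j b
    rw [← mul_assoc, hφA_symm, ← mul_assoc, hcj, ← H2]
  have K1 : ∀ (y : A) (j' : Fin (Module.finrank k A)),
      ∑ j, cj j * ι (σ (bA j * y) j') = y * cj j' := by
    intro y j'
    have h0 : ∀ z, φA (z * ((∑ j, cj j * ι (σ (bA j * y) j')) - y * cj j')) = 0 := by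
      intro z
      rw [mul_sub, map_sub, Finset.mul_sum, map_sum]
      have step : ∀ j ∈ Finset.univ, φA (z * (cj j * ι (σ (bA j * y) j')))
          = φB (σ (ι (σ z j) * (bA j * y)) j') := by
        intro j _
        rw [P, hφB_symm, H2]
      rw [Finset.sum_congr rfl step]
      have hz : (∑ j, ι (σ z j) * (bA j * y)) = z * y := by
        calc (∑ j, ι (σ z j) * (bA j * y)) = (∑ j, ι (σ z j) * bA j) * y := by
              rw [Finset.sum_mul]
              exact Finset.sum_congr rfl fun j _ => (mul_assoc _ _ _).symm
          _ = z * y := by rw [H1]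
      have sumσ : ∑ j, φB (σ (ι (σ z j) * (bA j * y)) j') = φB (σ (z * y) j') := by
        rw [← hz, map_sum σ, Finset.sum_apply, map_sum]
      rw [sumσ, ← hcj, mul_assoc, sub_self]
    exact sub_eq_zero.mp (ndA _ h0)
  have K2 : ∀ a : A, ∑ j, ∑ i, φA (bA j * a * ι (bB i)) • (cj j * ι (b' i)) = a := by
    intro a
    have h0 : ∀ z, φA (z * ((∑ j, ∑ i, φA (bA j * a * ι (bB i)) • (cj j * ι (b' i))) - a)) = 0 := by
      intro z
      rw [mul_sub, map_sub, Finset.mul_sum, map_sum]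
      have e1 : ∀ j ∈ Finset.univ, φA (z * ∑ i, φA (bA j * a * ι (bB i)) • (cj j * ι (b' i)))
          = φA (ι (σ z j) * (bA j * a)) := by
        intro j _
        rw [Finset.mul_sum, map_sum]
        have step : ∀ i ∈ Finset.univ, φA (z * φA (bA j * a * ι (bB i)) • (cj j * ι (b' i)))
            = φB (σ z j * b' i) • φA (bA j * a * ι (bB i)) := by
          intro i _
          rw [mul_smul_comm, map_smul, smul_eq_mul, smul_eq_mul, P, hφB_symm, mul_comm]
        rw [Finset.sum_congr rfl step]
        have e2 : ∑ i, φB (σ z j * b' i) • φA (bA j * a * ι (bB i))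
            = φA (bA j * a * ι (∑ i, φB (σ z j * b' i) • bB i)) := by
          rw [map_sum, Finset.mul_sum, map_sum]
          refine Finset.sum_congr rfl fun i _ => ?_
          rw [map_smul, mul_smul_comm, map_smul]
        rw [e2, expand1, hφA_symm]
      rw [Finset.sum_congr rfl e1]
      have hz : ∑ j, ι (σ z j) * (bA j * a) = z * a := by
        calc (∑ j, ι (σ z j) * (bA j * a)) = (∑ j, ι (σ z j) * bA j) * a := by
              rw [Finset.sum_mul]
              exact Finset.sum_congr rfl fun j _ => (mul_assoc _ _ _).symm
          _ = z * a := by rw [H1]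
      rw [← map_sum, hz, sub_self]
    exact sub_eq_zero.mp (ndA _ h0)
  have K3 : ∀ j, ∑ i, φA (cj j * ι (bB i)) • b' i = σ 1 j := by
    intro j
    have step : ∀ i ∈ Finset.univ, φA (cj j * ι (bB i)) • b' i = φB (bB i * σ 1 j) • b' i := by
      intro i _
      rw [show φA (cj j * ι (bB i)) = φA (1 * (cj j * ι (bB i))) from by rw [one_mul], P]
    rw [Finset.sum_congr rfl step, expand2]
  refine ⟨?_, ?_⟩
  · intro M _ _ _ _ N _ _ _ _ _ _ hN
    have hbal : ∀ (c : A) (b : B) (m : M),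
        (Submodule.Quotient.mk ((c * ι b) ⊗ₜ[k] m) : T k A B ι M)
          = Submodule.Quotient.mk (c ⊗ₜ[k] (b • m)) := by
      intro c b m
      rw [Submodule.Quotient.eq]
      exact Submodule.subset_span ⟨c, b, m, rfl⟩
    have hfk : ∀ (f : M →ₗ[B] N) (c : k) (m : M), f (c • m) = c • f m := by
      intro f c m
      rw [← algebraMap_smul B c m, map_smul, hN, AlgHom.commutes ι c, algebraMap_smul]
    set L0 : (M →ₗ[B] N) → (A ⊗[k] M →ₗ[k] N) := fun f =>
      TensorProduct.lift
        (LinearMap.mk₂ k (fun a m => a • f m)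
          (fun a a' m => by simp only [add_smul])
          (fun c a m => by simp only [smul_assoc])
          (fun a m m' => by simp only [map_add, smul_add])
          (fun c a m => by simp only [hfk]; rw [smul_comm])) with hL0
    have hL0t : ∀ f (a : A) (m : M), L0 f (a ⊗ₜ[k] m) = a • f m := by
      intro f a m
      simp only [hL0, TensorProduct.lift.tmul, LinearMap.mk₂_apply]
    have L0smul : ∀ f (a' : A) z, L0 f (a' • z) = a' • L0 f z := by
      intro f a' z
      induction z using TensorProduct.induction_on with
      | zero => rw [smul_zero, map_zero, smul_zero]
      | tmul a m => rw [smul_tmul', smul_eq_mul, hL0t, hL0t, mul_smul]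
      | add x y hx hy => rw [smul_add, map_add, map_add, hx, hy, smul_add]
    set L : (M →ₗ[B] N) → (A ⊗[k] M →ₗ[A] N) := fun f =>
      { toFun := L0 f
        map_add' := (L0 f).map_add
        map_smul' := fun a z => L0smul f a z } with hL
    have hLt : ∀ f (z : A ⊗[k] M), L f z = L0 f z := fun f z => rfl
    have hker : ∀ f, rel k A B ι M ≤ LinearMap.ker (L f) := by
      intro f
      rw [rel, Submodule.span_le]
      rintro z ⟨a, b, m, rfl⟩
      simp only [SetLike.mem_coe, LinearMap.mem_ker, map_sub, hLt, hL0t]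
      rw [f.map_smul, hN, mul_smul, sub_self]
    set Ψ : (M →ₗ[B] N) → (T k A B ι M →ₗ[A] N) := fun f =>
      Submodule.liftQ _ (L f) (hker f) with hΨdef
    have hΨ : ∀ f z, Ψ f (Submodule.Quotient.mk z) = L0 f z := fun f z => rfl
    set Efwd : (T k A B ι M →ₗ[A] N) → (M →ₗ[B] N) := fun ψ =>
      { toFun := fun m => ψ (Submodule.Quotient.mk ((1:A) ⊗ₜ[k] m))
        map_add' := by
          intro m m'
          show ψ (Submodule.Quotient.mk ((1:A) ⊗ₜ[k] (m + m')))
            = ψ (Submodule.Quotient.mk ((1:A) ⊗ₜ[k] m)) + ψ (Submodule.Quotient.mk ((1:A) ⊗ₜ[k] m'))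
          rw [TensorProduct.tmul_add, Submodule.Quotient.mk_add, map_add]
        map_smul' := by
          intro b m
          show ψ (Submodule.Quotient.mk ((1:A) ⊗ₜ[k] (b • m)))
            = b • ψ (Submodule.Quotient.mk ((1:A) ⊗ₜ[k] m))
          have h1 : ((1:A) * ι b) ⊗ₜ[k] m = ι b • ((1:A) ⊗ₜ[k] m) := by
            rw [smul_tmul', smul_eq_mul, mul_one, one_mul]
          rw [← hbal, h1, Submodule.Quotient.mk_smul, map_smul, ← hN] }
      with hEfwd
    refine ⟨{ toFun := Efwd, invFun := Ψ, left_inv := ?_, right_inv := ?_ },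
      fun ψ m => rfl⟩
    · intro ψ
      apply LinearMap.ext
      intro t
      obtain ⟨z, rfl⟩ := Submodule.Quotient.mk_surjective _ t
      induction z using TensorProduct.induction_on with
      | zero => simp
      | tmul a m =>
        rw [hΨ, hL0t]
        show a • ψ (Submodule.Quotient.mk ((1:A) ⊗ₜ[k] m)) = ψ (Submodule.Quotient.mk (a ⊗ₜ[k] m))
        rw [← map_smul, ← Submodule.Quotient.mk_smul, smul_tmul', smul_eq_mul, mul_one]
      | add x y hx hy =>
        rw [Submodule.Quotient.mk_add, map_add, map_add, hx, hy]
    · intro f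
      apply LinearMap.ext
      intro m
      show Ψ f (Submodule.Quotient.mk ((1:A) ⊗ₜ[k] m)) = f m
      rw [hΨ, hL0t, one_smul]
  · intro M _ _ _ _
    set Q := (rel k A B ι M).mkQ with hQdef
    have hbal : ∀ (c : A) (b : B) (m : M), Q ((c * ι b) ⊗ₜ[k] m) = Q (c ⊗ₜ[k] (b • m)) := by
      intro c b m
      rw [hQdef, Submodule.mkQ_apply, Submodule.mkQ_apply, Submodule.Quotient.eq]
      exact Submodule.subset_span ⟨c, b, m, rfl⟩
    have sumsmul : ∀ (f : Fin (Module.finrank k B) → k) (g : Fin (Module.finrank k B) → B)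
        (m : M), (∑ i, f i • g i) • m = ∑ i, f i • (g i • m) := by
      intro f g m
      rw [Finset.sum_smul]
      exact Finset.sum_congr rfl fun i _ => smul_assoc _ _ _
    -- the map Θ₀ : A ⊗ M → Hom_k(A, M)
    set Θ0 : A ⊗[k] M →ₗ[k] (A →ₗ[k] M) :=
      TensorProduct.lift (LinearMap.mk₂ k
        (fun a m => ∑ i, (φA.comp (LinearMap.mulRight k (a * ι (bB i)))).smulRight (b' i • m))
        (fun a a' m => by
          ext x
          simp [add_mul, mul_add, map_add, add_smul, Finset.sum_add_distrib, mul_assoc])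
        (fun c a m => by
          ext x
          simp only [LinearMap.coe_sum, Finset.sum_apply, LinearMap.smulRight_apply,
            LinearMap.coe_comp, Function.comp_apply, LinearMap.mulRight_apply,
            LinearMap.smul_apply, Finset.smul_sum, smul_mul_assoc, mul_smul_comm,
            map_smul, smul_eq_mul, mul_smul])
        (fun a m m' => by
          ext x
          simp [smul_add, Finset.sum_add_distrib])
        (fun c a m => by
          ext x
          simp only [LinearMap.coe_sum, Finset.sum_apply, LinearMap.smulRight_apply,
            LinearMap.coe_comp, Function.comp_apply, LinearMap.mulRight_apply,
            LinearMap.smul_apply, Finset.smul_sum]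
          refine Finset.sum_congr rfl fun i _ => ?_
          rw [smul_comm (b' i) c m, smul_comm])) with hΘ0
    have hΘ0t : ∀ (a : A) (m : M) (x : A),
        Θ0 (a ⊗ₜ[k] m) x = ∑ i, φA (x * a * ι (bB i)) • (b' i • m) := by
      intro a m x
      simp only [hΘ0, TensorProduct.lift.tmul, LinearMap.mk₂_apply, LinearMap.coe_sum,
        Finset.sum_apply, LinearMap.smulRight_apply, LinearMap.coe_comp, Function.comp_apply,
        LinearMap.mulRight_apply]
      exact Finset.sum_congr rfl fun i _ => by rw [mul_assoc]
    have T1 : ∀ (a' : A) (z : A ⊗[k] M) (x : A), Θ0 (a' • z) x = Θ0 z (x * a') := by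
      intro a' z x
      induction z using TensorProduct.induction_on with
      | zero => rw [smul_zero]; simp
      | tmul a m =>
        rw [smul_tmul', smul_eq_mul, hΘ0t, hΘ0t]
        exact Finset.sum_congr rfl fun i _ => by rw [mul_assoc x a' a]
      | add u v hu hv =>
        rw [smul_add, map_add, map_add, LinearMap.add_apply, LinearMap.add_apply, hu, hv]
    have T2 : ∀ (z : A ⊗[k] M) (b : B) (x : A), Θ0 z (ι b * x) = b • Θ0 z x := by
      intro z b x
      induction z using TensorProduct.induction_on with
      | zero => simp
      | tmul a m =>
        rw [hΘ0t, hΘ0t]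
        set μ : B →ₗ[k] k := φA.comp ((LinearMap.mulLeft k (x * a)).comp ι.toLinearMap) with hμ
        have hμc : ∀ c : B, μ c = φA ((x * a) * ι c) := fun c => rfl
        have step : ∀ i ∈ Finset.univ, φA (ι b * x * a * ι (bB i)) • (b' i • m)
            = μ (bB i * b) • (b' i • m) := by
          intro i _
          congr 1
          simp only [hμc, map_mul, mul_assoc]
          rw [hφA_symm]
          simp only [mul_assoc]
        rw [Finset.sum_congr rfl step, ← sumsmul, casimir2 μ b, sumsmul, Finset.smul_sum]
        refine Finset.sum_congr rfl fun i _ => ?_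
        rw [hμc, mul_smul]
        rw [smul_comm]
      | add u v hu hv =>
        rw [map_add, LinearMap.add_apply, LinearMap.add_apply, hu, hv, smul_add]
    have T3 : ∀ z ∈ rel k A B ι M, Θ0 z = 0 := by
      intro z hz
      induction hz using Submodule.span_induction with
      | mem z hzmem =>
        obtain ⟨a, b, m, rfl⟩ := hzmem
        rw [map_sub]
        ext x
        rw [LinearMap.sub_apply, LinearMap.zero_apply, hΘ0t, hΘ0t]
        set μ : B →ₗ[k] k := φA.comp ((LinearMap.mulLeft k (x * a)).comp ι.toLinearMap) with hμ
        have hμc : ∀ c : B, μ c = φA ((x * a) * ι c) := fun c => rfl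
        have step : ∀ i ∈ Finset.univ, φA (x * (a * ι b) * ι (bB i)) • (b' i • m)
            = μ (b * bB i) • (b' i • m) := by
          intro i _
          congr 1
          simp only [hμc, map_mul, mul_assoc]
        rw [Finset.sum_congr rfl step, ← sumsmul, casimir1 μ b, sumsmul]
        have step2 : ∀ i ∈ Finset.univ, μ (bB i) • ((b' i * b) • m)
            = φA (x * a * ι (bB i)) • (b' i • (b • m)) := by
          intro i _
          rw [hμc, mul_smul]
        rw [Finset.sum_congr rfl step2, sub_self]
      | zero => rw [map_zero]
      | add u v hu hv hu' hv' => rw [map_add, hu', hv', add_zero]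
      | smul a' u hu hu' =>
        ext x
        rw [LinearMap.zero_apply, T1, hu', LinearMap.zero_apply]
    -- descend to the quotient, k-linearly
    have hker2 : Submodule.restrictScalars k (rel k A B ι M) ≤ LinearMap.ker Θ0 :=
      fun z hz => LinearMap.mem_ker.mpr (T3 z hz)
    set Θbar : T k A B ι M →ₗ[k] (A →ₗ[k] M) :=
      (Submodule.liftQ _ Θ0 hker2).comp
        (Submodule.Quotient.restrictScalarsEquiv k (rel k A B ι M)).symm.toLinearMap with hΘbar
    have hΘmk : ∀ z : A ⊗[k] M, Θbar (Q z) = Θ0 z := by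
      intro z
      simp only [hΘbar, hQdef, Submodule.mkQ_apply, LinearMap.coe_comp, Function.comp_apply,
        LinearEquiv.coe_coe, Submodule.Quotient.restrictScalarsEquiv_symm_mk,
        Submodule.liftQ_apply]
    have T1bar : ∀ (a' : A) (t : T k A B ι M) (x : A), Θbar (a' • t) x = Θbar t (x * a') := by
      intro a' t x
      obtain ⟨z, rfl⟩ := Submodule.mkQ_surjective _ t
      rw [show a' • (rel k A B ι M).mkQ z = Q (a' • z) from by rw [hQdef, map_smul],
        show (rel k A B ι M).mkQ z = Q z from rfl, hΘmk, hΘmk, T1]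
    have T2bar : ∀ (t : T k A B ι M) (b : B) (x : A), Θbar t (ι b * x) = b • Θbar t x := by
      intro t b x
      obtain ⟨z, rfl⟩ := Submodule.mkQ_surjective _ t
      rw [show (rel k A B ι M).mkQ z = Q z from rfl, hΘmk, T2]
    have T2bar1 : ∀ (t : T k A B ι M) (b : B), Θbar t (ι b) = b • Θbar t 1 := by
      intro t b
      have := T2bar t b 1
      rwa [mul_one] at this
    -- the adjunction equivalence
    refine ⟨fun N _ _ _ _ _ _ hN =>
      { toFun := fun f =>
          { toFun := fun n => ∑ j, Q (cj j ⊗ₜ[k] f (bA j • n))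
            map_add' := by
              intro n n'
              show (∑ j, Q (cj j ⊗ₜ[k] f (bA j • (n + n'))))
                = (∑ j, Q (cj j ⊗ₜ[k] f (bA j • n))) + ∑ j, Q (cj j ⊗ₜ[k] f (bA j • n'))
              rw [← Finset.sum_add_distrib]
              refine Finset.sum_congr rfl fun j _ => ?_
              rw [smul_add, map_add, TensorProduct.tmul_add, map_add]
            map_smul' := by
              intro y n
              show (∑ j, Q (cj j ⊗ₜ[k] f (bA j • (y • n))))
                = y • ∑ j, Q (cj j ⊗ₜ[k] f (bA j • n))
              have step1 : ∀ j, f (bA j • (y • n)) = ∑ j', σ (bA j * y) j' • f (bA j' • n) := by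
                intro j
                rw [← mul_smul]
                conv_lhs => rw [← H1 (bA j * y)]
                rw [Finset.sum_smul, map_sum]
                refine Finset.sum_congr rfl fun j' _ => ?_
                rw [mul_smul, ← hN, f.map_smul]
              calc (∑ j, Q (cj j ⊗ₜ[k] f (bA j • (y • n))))
                  = ∑ j, ∑ j', Q ((cj j * ι (σ (bA j * y) j')) ⊗ₜ[k] f (bA j' • n)) := by
                    refine Finset.sum_congr rfl fun j _ => ?_
                    rw [step1 j, TensorProduct.tmul_sum, map_sum]
                    exact Finset.sum_congr rfl fun j' _ => (hbal _ _ _).symm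
                _ = ∑ j', Q ((∑ j, cj j * ι (σ (bA j * y) j')) ⊗ₜ[k] f (bA j' • n)) := by
                    rw [Finset.sum_comm]
                    refine Finset.sum_congr rfl fun j' _ => ?_
                    rw [TensorProduct.sum_tmul, map_sum]
                _ = ∑ j', Q ((y * cj j') ⊗ₜ[k] f (bA j' • n)) := by
                    refine Finset.sum_congr rfl fun j' _ => ?_
                    rw [K1]
                _ = y • ∑ j', Q (cj j' ⊗ₜ[k] f (bA j' • n)) := by
                    rw [Finset.smul_sum]
                    refine Finset.sum_congr rfl fun j' _ => ?_
                    rw [← map_smul, smul_tmul', smul_eq_mul] }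
        invFun := fun ψ =>
          { toFun := fun n => Θbar (ψ n) 1
            map_add' := by
              intro n n'
              show Θbar (ψ (n + n')) 1 = Θbar (ψ n) 1 + Θbar (ψ n') 1
              rw [map_add, map_add, LinearMap.add_apply]
            map_smul' := by
              intro b n
              show Θbar (ψ (b • n)) 1 = b • Θbar (ψ n) 1
              rw [hN, map_smul, T1bar, one_mul, T2bar1] }
        left_inv := by
          intro f
          apply LinearMap.ext
          intro n
          show Θbar (∑ j, Q (cj j ⊗ₜ[k] f (bA j • n))) 1 = f n
          calc Θbar (∑ j, Q (cj j ⊗ₜ[k] f (bA j • n))) 1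
              = ∑ j, Θ0 (cj j ⊗ₜ[k] f (bA j • n)) 1 := by
                rw [map_sum, LinearMap.sum_apply]
                exact Finset.sum_congr rfl fun j _ => by rw [hΘmk]
            _ = ∑ j, (σ 1 j) • f (bA j • n) := by
                refine Finset.sum_congr rfl fun j _ => ?_
                rw [hΘ0t]
                simp only [one_mul]
                rw [← sumsmul, K3]
            _ = f n := by
                have e : ∀ j ∈ Finset.univ, (σ 1 j) • f (bA j • n)
                    = f ((ι (σ 1 j) * bA j) • n) := by
                  intro j _
                  rw [mul_smul, ← hN, f.map_smul]
                rw [Finset.sum_congr rfl e, ← map_sum, ← Finset.sum_smul, H1, one_smul]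
        right_inv := by
          intro ψ
          apply LinearMap.ext
          intro n
          show (∑ j, Q (cj j ⊗ₜ[k] Θbar (ψ (bA j • n)) 1)) = ψ n
          have R : ∀ t : T k A B ι M, (∑ j, Q (cj j ⊗ₜ[k] Θbar t (bA j))) = t := by
            intro t
            obtain ⟨z, rfl⟩ := Submodule.mkQ_surjective _ t
            show (∑ j, Q (cj j ⊗ₜ[k] Θbar (Q z) (bA j))) = Q z
            induction z using TensorProduct.induction_on with
            | zero => simp
            | tmul a m =>
              rw [hΘmk]
              calc (∑ j, Q (cj j ⊗ₜ[k] Θ0 (a ⊗ₜ[k] m) (bA j)))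
                  = ∑ j, ∑ i, Q ((φA (bA j * a * ι (bB i)) • (cj j * ι (b' i))) ⊗ₜ[k] m) := by
                    refine Finset.sum_congr rfl fun j _ => ?_
                    rw [hΘ0t, TensorProduct.tmul_sum, map_sum]
                    refine Finset.sum_congr rfl fun i _ => ?_
                    rw [← smul_assoc, ← hbal, map_smul, mul_smul_comm]
                _ = Q ((∑ j, ∑ i, φA (bA j * a * ι (bB i)) • (cj j * ι (b' i))) ⊗ₜ[k] m) := by
                    symm
                    rw [TensorProduct.sum_tmul, map_sum]
                    refine Finset.sum_congr rfl fun j _ => ?_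
                    rw [TensorProduct.sum_tmul, map_sum]
                _ = Q (a ⊗ₜ[k] m) := by rw [K2]
            | add u v hu hv =>
              rw [map_add, map_add]
              simp only [LinearMap.add_apply, TensorProduct.tmul_add, map_add,
                Finset.sum_add_distrib]
              rw [hu, hv]
          have e : ∀ j ∈ Finset.univ, Q (cj j ⊗ₜ[k] Θbar (ψ (bA j • n)) 1)
              = Q (cj j ⊗ₜ[k] Θbar (ψ n) (bA j)) := by
            intro j _
            have h2 : Θbar (ψ (bA j • n)) 1 = Θbar (ψ n) (bA j) := by
              rw [ψ.map_smul, T1bar, one_mul]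
            rw [h2]
          exact (Finset.sum_congr rfl e).trans (R (ψ n)) }, ?_⟩
    intro N _ _ _ _ _ _ hN N' _ _ _ _ _ _ hN' f φ
    apply LinearMap.ext
    intro n'
    show (∑ j, Q (cj j ⊗ₜ[k] (φ ((LinearMap.restrictScalars B f) (bA j • n')))))
      = ∑ j, Q (cj j ⊗ₜ[k] φ (bA j • f n'))
    refine Finset.sum_congr rfl fun j _ => ?_
    rw [LinearMap.restrictScalars_apply, map_smul]

end Statement11
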